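/- Let A be a set, k ≥ 1 an integer, and let d_0, d_1, …, d_k : A³ → A be directed Jónsson operations, that is, satisfying for all elements of A: d_0(x,y,z) = x; d_i(x,y,x) = x for 0 ≤ i ≤ k; d_i(x,z,z) = d_{i+1}(x,x,z) for 0 ≤ i < k; d_k(x,y,z) = z. Let ℓ ≥ 2 be an even integer, let α be a tolerance with respect to d_0, …, d_k, and let S, T be reflexive relations on A compatible with each d_i. Then α ∩ (S ∘_ℓ T) ⊆ (α ∩ S) ∘_{ℓ(k−1)} (α ∩ T). -/

import Mathlib

/-- Relational composition: `a (Comp R S) c` iff there is `b` with `a R b` and `b S c`. -/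
def Comp {A : Type*} (R S : A → A → Prop) : A → A → Prop :=
  fun a c => ∃ b, R a b ∧ S b c

/-- `AltComp R S m` is the alternating composition `R ∘ S ∘ R ∘ ⋯` with exactly `m` factors. -/
def AltComp {A : Type*} : (R S : A → A → Prop) → ℕ → A → A → Prop
  | _, _, 0 => Eq
  | R, _, 1 => R
  | R, S, (n+2) => Comp R (AltComp S R (n+1))

/-- Converse relation. -/
def Conv {A : Type*} (R : A → A → Prop) : A → A → Prop := fun a b => R b a

/-- Intersection of relations. -/
def InterRel {A : Type*} (R S : A → A → Prop) : A → A → Prop := fun a b => R a b ∧ S a b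

/-- `RelPow R n` is `R ∘ R ∘ ⋯ ∘ R` with `n` factors. -/
def RelPow {A : Type*} (R : A → A → Prop) : ℕ → A → A → Prop
  | 0 => Eq
  | 1 => R
  | n+2 => Comp R (RelPow R (n+1))

/-- Compatibility of a relation with a ternary operation. -/
def Compat3 {A : Type*} (f : A → A → A → A) (R : A → A → Prop) : Prop :=
  ∀ a a' b b' c c', R a a' → R b b' → R c c' → R (f a b c) (f a' b' c')

/-- Compatibility of a relation with an `n`-ary operation. -/
def CompatV {A : Type*} {n : ℕ} (f : (Fin n → A) → A) (R : A → A → Prop) : Prop :=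
  ∀ a b : Fin n → A, (∀ i, R (a i) (b i)) → R (f a) (f b)

/-- Composition `S 0 ∘ S 1 ∘ ⋯ ∘ S (n-1)` of a family of `n` relations. -/
def FamComp {A : Type*} : (n : ℕ) → (Fin n → A → A → Prop) → A → A → Prop
  | 0, _ => Eq
  | 1, S => S 0
  | n+2, S => Comp (S 0) (FamComp (n+1) (fun i => S i.succ))

/-- The substitution `x_0, x_0, x_2, x_2, x_4, x_4, …` (arguments identified in
consecutive pairs starting from the first two). -/
def EvenPair {A : Type*} (m : ℕ) (x : Fin (m+2) → A) : Fin (m+2) → A :=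
  fun j => x ⟨2 * (j.val / 2), by have := j.isLt; omega⟩

/-- The substitution `x_0, x_1, x_1, x_3, x_3, …` (arguments identified in
consecutive pairs starting from the second and third). -/
def OddPair {A : Type*} (m : ℕ) (x : Fin (m+2) → A) : Fin (m+2) → A :=
  fun j => x ⟨2 * ((j.val + 1) / 2) - 1, by have := j.isLt; omega⟩

/-!
For each `i`, the unary polynomial `y ↦ dᵢ(a, y, c)` carries an `S ∘ T ∘ ⋯` chain from `a` to `c`
onto a chain from `dᵢ(a, a, c)` to `dᵢ(a, c, c)`. Since `dᵢ(x, y, x) = x` and `α a c`, every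
`dᵢ(a, y, c)` is `α`-related to both `a` and `c`, hence any two of them are `α`-related, so the new
chain lies in `α ∩ S` and `α ∩ T`. The identities `dᵢ(a, c, c) = dᵢ₊₁(a, a, c)` glue the chains for
`i = 1, …, k - 1` end to end, from `d₁(a, a, c) = d₀(a, c, c) = a` to `dₖ₋₁(a, c, c) = dₖ(a, a, c) = c`;
as `ℓ` is even, each glued chain starts with an `S`-step.
-/

section AltComp

variable {A : Type*} {R S : A → A → Prop}

theorem altComp_add_two {m : ℕ} {x z : A} :
    AltComp R S (m + 2) x z ↔ ∃ y w, R x y ∧ S y w ∧ AltComp R S m w z := by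
  cases m with
  | zero => exact ⟨fun ⟨y, hxy, hyz⟩ => ⟨y, _, hxy, hyz, rfl⟩,
      fun ⟨y, _, hxy, hyw, hwz⟩ => ⟨y, hxy, hwz ▸ hyw⟩⟩
  | succ m => exact ⟨fun ⟨y, hxy, w, hyw, hwz⟩ => ⟨y, w, hxy, hyw, hwz⟩,
      fun ⟨y, w, hxy, hyw, hwz⟩ => ⟨y, hxy, w, hyw, hwz⟩⟩

theorem AltComp.map {R' S' : A → A → Prop} (f : A → A)
    (hR : ∀ x y, R x y → R' (f x) (f y)) (hS : ∀ x y, S x y → S' (f x) (f y)) :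
    ∀ {m : ℕ} {x y : A}, AltComp R S m x y → AltComp R' S' m (f x) (f y)
  | 0, _, _, h => congrArg f h
  | 1, _, _, h => hR _ _ h
  | _ + 2, _, _, h => by
    obtain ⟨y, w, hxy, hyw, hwz⟩ := altComp_add_two.1 h
    exact altComp_add_two.2 ⟨f y, f w, hR _ _ hxy, hS _ _ hyw, AltComp.map f hR hS hwz⟩

theorem AltComp.trans_of_even {m n : ℕ} (hm : Even m) {x y z : A}
    (hxy : AltComp R S m x y) (hyz : AltComp R S n y z) : AltComp R S (m + n) x z := by
  obtain ⟨j, rfl⟩ := hm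
  induction j generalizing x with
  | zero => cases hxy; simpa using hyz
  | succ j ih =>
    rw [show j + 1 + (j + 1) = j + j + 2 by omega, altComp_add_two] at hxy
    rw [show j + 1 + (j + 1) + n = j + j + n + 2 by omega, altComp_add_two]
    obtain ⟨u, w, hxu, huw, hwy⟩ := hxy
    exact ⟨u, w, hxu, huw, ih hwy⟩

theorem altComp_mul_of_forall_castSucc_succ {ℓ : ℕ} (hℓ : Even ℓ) :
    ∀ {n : ℕ} (x : Fin (n + 1) → A), (∀ i : Fin n, AltComp R S ℓ (x i.castSucc) (x i.succ)) →
      AltComp R S (ℓ * n) (x 0) (x (Fin.last n))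
  | 0, _, _ => rfl
  | n + 1, x, hx => by
    have hinit := altComp_mul_of_forall_castSucc_succ hℓ (fun i => x i.castSucc)
      (fun i => hx i.castSucc)
    exact hinit.trans_of_even (hℓ.mul_right n) (hx (Fin.last n))

end AltComp

section Compat3

variable {A : Type*} {f : A → A → A → A} {α : A → A → Prop}

theorem Compat3.rel_of_rel_outer (hf : Compat3 f α) (hidem : ∀ x y, f x y x = x)
    (hrefl : ∀ a, α a a) (hsymm : ∀ a b, α a b → α b a) {a c : A} (hac : α a c) (y y' : A) :
    α (f a y c) (f a y' c) := by
  have hya : α (f a y c) a := by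
    simpa only [hidem] using hf _ _ _ _ _ _ (hrefl a) (hrefl y) (hsymm _ _ hac)
  have hyc : α (f a y c) c := by
    simpa only [hidem] using hf _ _ _ _ _ _ hac (hrefl y) (hrefl c)
  simpa only [hidem] using hf _ _ _ _ _ _ hya (hrefl y') hyc

theorem AltComp.inter_of_compat3 {S T : A → A → Prop} (hidem : ∀ x y, f x y x = x)
    (hαrefl : ∀ a, α a a) (hαsymm : ∀ a b, α a b → α b a) (hαf : Compat3 f α)
    (hSrefl : ∀ a, S a a) (hSf : Compat3 f S) (hTrefl : ∀ a, T a a) (hTf : Compat3 f T)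
    {m : ℕ} {a c : A} (hac : α a c) (hST : AltComp S T m a c) :
    AltComp (InterRel α S) (InterRel α T) m (f a a c) (f a c c) :=
  hST.map (fun y => f a y c)
    (fun _ _ h => ⟨hαf.rel_of_rel_outer hidem hαrefl hαsymm hac _ _,
      hSf _ _ _ _ _ _ (hSrefl a) h (hSrefl c)⟩)
    (fun _ _ h => ⟨hαf.rel_of_rel_outer hidem hαrefl hαsymm hac _ _,
      hTf _ _ _ _ _ _ (hTrefl a) h (hTrefl c)⟩)

end Compat3

theorem stmt11 {A : Type*}
    (k : ℕ) (hk : 1 ≤ k) (d : Fin (k+1) → A → A → A → A)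
    (hd0 : ∀ x y z, d 0 x y z = x)
    (hdmid : ∀ (i : Fin (k+1)) x y, d i x y x = x)
    (hdir : ∀ (i : ℕ) (hi : i < k) x z, d ⟨i, by omega⟩ x z z = d ⟨i+1, by omega⟩ x x z)
    (hdk : ∀ x y z, d (Fin.last k) x y z = z)
    (ℓ : ℕ) (hℓeven : Even ℓ)
    (α : A → A → Prop)
    (hαrefl : ∀ a, α a a) (hαsymm : ∀ a b, α a b → α b a)
    (hαcompat : ∀ i, Compat3 (d i) α)
    (S T : A → A → Prop)
    (hSrefl : ∀ a, S a a) (hScompat : ∀ i, Compat3 (d i) S)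
    (hTrefl : ∀ a, T a a) (hTcompat : ∀ i, Compat3 (d i) T) :
    ∀ a c, InterRel α (AltComp S T ℓ) a c →
      AltComp (InterRel α S) (InterRel α T) (ℓ * (k - 1)) a c := by
  rintro a c ⟨hac, hST⟩
  obtain ⟨n, rfl⟩ : ∃ n, k = n + 1 := ⟨k - 1, by omega⟩
  have hblock : ∀ i, AltComp (InterRel α S) (InterRel α T) ℓ (d i a a c) (d i a c c) :=
    fun i => hST.inter_of_compat3 (hdmid i) hαrefl hαsymm (hαcompat i) hSrefl (hScompat i)
      hTrefl (hTcompat i) hac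
  have hchain := altComp_mul_of_forall_castSucc_succ hℓeven (fun i : Fin (n + 1) => d i.succ a a c)
    (fun i => hdir (i + 1) (by omega) a c ▸ hblock i.castSucc.succ)
  have hstart : d (Fin.succ 0) a a c = a := (hdir 0 (by omega) a c).symm.trans (hd0 a c c)
  have hend : d (Fin.last n).succ a a c = c := hdk a a c
  simpa only [hstart, hend, Nat.add_sub_cancel] using hchain
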